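/- arXiv:2406.06365 — 3 statements merged into one kernel-verified Lean document; each statement's English description precedes it below -/
import Mathlib

section
/- The descent statistic and the excedance statistic are equidistributed over the symmetric group S_n: for every n ≥ 1, the sum over all permutations π of [n] of x^{des(π)} equals the sum over all permutations π of [n] of x^{exc(π)}. -/
/-!
The generating functions of `des` and `exc` over `S_n` both satisfy the Eulerian recursion
`A_{n+1}(x) = (1 + n x) A_n(x) + x (1 - x) A_n'(x)`, which sends `x ^ k` to
`(k + 1) x ^ k + (n - k) x ^ (k + 1)`, and both equal `1` for `n = 0`.

Every permutation of `{0, …, n}` arises exactly once from a permutation `σ` of `{0, …, n - 1}`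
and a position `p ≤ n`, in two ways. Inserting the letter `n` into the one-line notation of `σ`
at position `p` keeps the number of descents when `p = n` or when it splits a descent
`σ (p - 1) > σ p`, and creates one new descent otherwise; so `des σ + 1` positions keep `des`.
Inserting `n` into the cycle of `σ` right after `p` (as a fixed point when `p = n`) keeps the
number of excedances when `p = n` or `p` is an excedance of `σ`, and adds the excedance `p`
otherwise; so `exc σ + 1` positions keep `exc`.
-/

/-- The permutation `π` of `Fin n`, extended to a function `ℕ → ℕ` (acting as the
identity outside `{0, …, n-1}`); positions are 0-indexed. -/
def permToNat {n : ℕ} (π : Equiv.Perm (Fin n)) (i : ℕ) : ℕ :=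
  if h : i < n then (π ⟨i, h⟩ : ℕ) else i

/-- The number of descents of `π`: indices `i ∈ [n-1]` (here 0-indexed `i ∈ {0,…,n-2}`)
with `π(i) > π(i+1)`. -/
def des {n : ℕ} (π : Equiv.Perm (Fin n)) : ℕ :=
  ((Finset.range (n - 1)).filter fun i => permToNat π (i + 1) < permToNat π i).card

def exc {n : ℕ} (π : Equiv.Perm (Fin n)) : ℕ :=
  ((Finset.range n).filter fun i => i < permToNat π i).card

def maj {n : ℕ} (π : Equiv.Perm (Fin n)) : ℕ :=
  ∑ i ∈ (Finset.range (n - 1)).filter (fun i => permToNat π (i + 1) < permToNat π i), (i + 1)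


open Finset Polynomial Equiv Function

section Insertion

variable {n : ℕ}

theorem permToNat_of_lt (π : Perm (Fin n)) {i : ℕ} (hi : i < n) :
    permToNat π i = π ⟨i, hi⟩ :=
  dif_pos hi

theorem permToNat_of_le (π : Perm (Fin n)) {i : ℕ} (hi : n ≤ i) : permToNat π i = i :=
  dif_neg hi.not_gt

theorem permToNat_lt (π : Perm (Fin n)) {i : ℕ} (hi : i < n) : permToNat π i < n := by
  rw [permToNat_of_lt π hi]
  exact Fin.isLt _

theorem permToNat_le (π : Perm (Fin n)) {i : ℕ} (hi : i ≤ n) : permToNat π i ≤ n := by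
  rcases hi.lt_or_eq with hi | rfl
  · exact (permToNat_lt π hi).le
  · exact (permToNat_of_le π le_rfl).le

def extendLast (σ : Perm (Fin n)) : Perm (Fin (n + 1)) :=
  finSuccEquivLast.symm.permCongr (optionCongr σ)

@[simp]
theorem extendLast_castSucc (σ : Perm (Fin n)) (i : Fin n) :
    extendLast σ i.castSucc = (σ i).castSucc := by
  simp [extendLast]

@[simp]
theorem extendLast_last (σ : Perm (Fin n)) : extendLast σ (Fin.last n) = Fin.last n := by
  simp [extendLast]

theorem val_extendLast (σ : Perm (Fin n)) (i : Fin (n + 1)) :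
    (extendLast σ i : ℕ) = permToNat σ i := by
  induction i using Fin.lastCases with
  | last => simp [permToNat_of_le]
  | cast j => simp [permToNat_of_lt]

/-- The one-line notation of `σ` with the letter `n` inserted at position `p`. -/
def oneLineInsert (σ : Perm (Fin n)) (p : Fin (n + 1)) : Perm (Fin (n + 1)) :=
  (finSuccEquiv' p).trans ((optionCongr σ).trans finSuccEquivLast.symm)

@[simp]
theorem oneLineInsert_self (σ : Perm (Fin n)) (p : Fin (n + 1)) :
    oneLineInsert σ p p = Fin.last n := by
  simp [oneLineInsert]

@[simp]
theorem oneLineInsert_succAbove (σ : Perm (Fin n)) (p : Fin (n + 1)) (j : Fin n) :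
    oneLineInsert σ p (p.succAbove j) = (σ j).castSucc := by
  simp [oneLineInsert]

theorem permToNat_oneLineInsert (σ : Perm (Fin n)) (p : Fin (n + 1)) {i : ℕ} (hi : i ≤ n) :
    permToNat (oneLineInsert σ p) i =
      if i < p then permToNat σ i else if i = p then n else permToNat σ (i - 1) := by
  rw [permToNat_of_lt _ (Nat.lt_succ_of_le hi)]
  rcases Fin.eq_self_or_eq_succAbove p ⟨i, Nat.lt_succ_of_le hi⟩ with h | ⟨j, h⟩
  · have hip : i = p := congrArg Fin.val h
    simp [hip]
  · rw [h, oneLineInsert_succAbove, Fin.val_castSucc, ← permToNat_of_lt σ j.isLt]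
    replace h : i = (p.succAbove j : ℕ) := congrArg Fin.val h
    rcases lt_or_ge j.castSucc p with hjp | hjp
    · rw [Fin.succAbove_of_castSucc_lt _ _ hjp, Fin.val_castSucc] at h
      rw [Fin.lt_def, Fin.val_castSucc] at hjp
      rw [if_pos (by omega), h]
    · rw [Fin.succAbove_of_le_castSucc _ _ hjp, Fin.val_succ] at h
      rw [Fin.le_def, Fin.val_castSucc] at hjp
      rw [if_neg (by omega), if_neg (by omega), h, Nat.add_sub_cancel]

/-- `σ` with `n` inserted into its cycles right after `p`, i.e. `p ↦ n ↦ σ p`. -/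
def cycleInsert (σ : Perm (Fin n)) (p : Fin (n + 1)) : Perm (Fin (n + 1)) :=
  (extendLast σ).trans (swap (extendLast σ p) (Fin.last n))

@[simp]
theorem cycleInsert_self (σ : Perm (Fin n)) (p : Fin (n + 1)) :
    cycleInsert σ p p = Fin.last n := by
  simp [cycleInsert]

@[simp]
theorem cycleInsert_last (σ : Perm (Fin n)) (p : Fin (n + 1)) :
    cycleInsert σ p (Fin.last n) = extendLast σ p := by
  simp [cycleInsert]

theorem permToNat_cycleInsert (σ : Perm (Fin n)) (p : Fin (n + 1)) {i : ℕ} (hi : i ≤ n) :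
    permToNat (cycleInsert σ p) i =
      if i = p then n else if i = n then permToNat σ p else permToNat σ i := by
  have hi' : i < n + 1 := Nat.lt_succ_of_le hi
  have hext : ∀ j : Fin (n + 1), extendLast σ ⟨i, hi'⟩ = extendLast σ j ↔ i = j := by
    intro j
    rw [(extendLast σ).injective.eq_iff, Fin.ext_iff]
  rw [permToNat_of_lt _ hi', cycleInsert, trans_apply, swap_apply_def]
  have hlast : extendLast σ ⟨i, hi'⟩ = Fin.last n ↔ i = n := by
    rw [← extendLast_last σ, hext, Fin.val_last]
  simp only [hext, hlast]
  split_ifs <;> simp [val_extendLast]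

end Insertion

section Statistics

def descentCount (f : ℕ → ℕ) (m : ℕ) : ℕ :=
  #{i ∈ range m | f (i + 1) < f i}

def excedanceCount (f : ℕ → ℕ) (m : ℕ) : ℕ :=
  #{i ∈ range m | i < f i}

theorem descentCount_le (f : ℕ → ℕ) (m : ℕ) : descentCount f m ≤ m :=
  (card_filter_le _ _).trans (card_range m).le

theorem excedanceCount_le (f : ℕ → ℕ) (m : ℕ) : excedanceCount f m ≤ m :=
  (card_filter_le _ _).trans (card_range m).le

theorem descentCount_succ (f : ℕ → ℕ) (m : ℕ) :
    descentCount f (m + 1) = descentCount f m + if f (m + 1) < f m then 1 else 0 := by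
  simp only [descentCount, card_filter, sum_range_succ]

theorem excedanceCount_succ (f : ℕ → ℕ) (m : ℕ) :
    excedanceCount f (m + 1) = excedanceCount f m + if m < f m then 1 else 0 := by
  simp only [excedanceCount, card_filter, sum_range_succ]

theorem descentCount_congr {f g : ℕ → ℕ} {m : ℕ} (h : ∀ i ≤ m, f i = g i) :
    descentCount f m = descentCount g m := by
  refine congrArg card (filter_congr fun i hi => ?_)
  rw [mem_range] at hi
  rw [h i hi.le, h (i + 1) hi]

theorem excedanceCount_congr {f g : ℕ → ℕ} {m : ℕ} (h : ∀ i < m, f i = g i) :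
    excedanceCount f m = excedanceCount g m :=
  congrArg card (filter_congr fun i hi => by rw [h i (mem_range.1 hi)])

theorem descentCount_add_of_shift {f g : ℕ → ℕ} {p k : ℕ}
    (h : ∀ i, p < i → i ≤ p + 1 + k → g i = f (i - 1)) :
    descentCount g (p + 1 + k) + descentCount f p =
      descentCount g (p + 1) + descentCount f (p + k) := by
  induction k with
  | zero => rfl
  | succ k ih =>
    have hk := ih fun i hi hik => h i hi (by omega)
    have h₁ : g (p + 1 + k + 1) = f (p + k + 1) := by
      rw [h _ (by omega) (by omega)]; congr 1; omega
    have h₂ : g (p + 1 + k) = f (p + k) := by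
      rw [h _ (by omega) (by omega)]; congr 1; omega
    rw [← add_assoc, ← add_assoc, descentCount_succ g (p + 1 + k), descentCount_succ f (p + k),
      h₁, h₂]
    omega

theorem descentCount_insert {f g : ℕ → ℕ} {m p v : ℕ} (hp : p ≤ m) (hv : ∀ i < m, f i < v)
    (hg : ∀ i ≤ m, g i = if i < p then f i else if i = p then v else f (i - 1)) :
    descentCount g m = if p = m ∨ (0 < p ∧ f p < f (p - 1))
      then descentCount f (m - 1) else descentCount f (m - 1) + 1 := by
  have hbefore : ∀ i < p, g i = f i := fun i hi =>
    (hg i (by omega)).trans (if_pos hi)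
  have hat : g p = v := (hg p hp).trans (by rw [if_neg (lt_irrefl p), if_pos rfl])
  have hafter : ∀ i, p < i → i ≤ m → g i = f (i - 1) := fun i hpi hi =>
    (hg i hi).trans (by rw [if_neg (by omega), if_neg (by omega)])
  have hhead : descentCount g p = descentCount f (p - 1) := by
    cases p with
    | zero => rfl
    | succ q =>
      rw [descentCount_succ, hat, hbefore q (by omega), if_neg (hv q (by omega)).not_gt,
        add_zero, Nat.add_sub_cancel]
      exact descentCount_congr fun i hi => hbefore i (by omega)
  rcases hp.eq_or_lt with rfl | hpm
  · rw [if_pos (Or.inl rfl), hhead]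
  obtain ⟨k, rfl⟩ : ∃ k, m = p + 1 + k := ⟨m - p - 1, by omega⟩
  have htail := descentCount_add_of_shift (f := f) (g := g) (hafter · · ·)
  have hnew : descentCount g (p + 1) = descentCount g p + 1 := by
    rw [descentCount_succ, hafter (p + 1) (by omega) (by omega), hat, Nat.add_sub_cancel,
      if_pos (hv p hpm)]
  have hdrop : descentCount f p =
      descentCount f (p - 1) + if 0 < p ∧ f p < f (p - 1) then 1 else 0 := by
    cases p with
    | zero => rfl
    | succ q => simp only [descentCount_succ, Nat.add_sub_cancel, Nat.zero_lt_succ, true_and]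
  rw [show p + 1 + k - 1 = p + k by omega]
  split_ifs at hdrop ⊢ <;> omega

theorem card_filter_descent_positions (f : ℕ → ℕ) (m : ℕ) :
    #{p ∈ range (m + 1) | p = m ∨ (0 < p ∧ f p < f (p - 1))} =
      descentCount f (m - 1) + 1 := by
  rw [range_add_one, filter_insert, if_pos (Or.inl rfl), card_insert_of_notMem (by simp),
    filter_congr (q := fun p => 0 < p ∧ f p < f (p - 1)) fun p hp => by
      simp [(mem_range.1 hp).ne]]
  congr 1
  cases m with
  | zero => rfl
  | succ m =>
    rw [card_filter, sum_range_succ', descentCount, card_filter, Nat.add_sub_cancel]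
    simp

theorem excedanceCount_insert {f g : ℕ → ℕ} {n p : ℕ} (hp : p ≤ n) (hf : ∀ i ≤ n, f i ≤ n)
    (hg : ∀ i ≤ n, g i = if i = p then n else if i = n then f p else f i) :
    excedanceCount g (n + 1) = if p = n ∨ p < f p
      then excedanceCount f n else excedanceCount f n + 1 := by
  have hlast : ¬ n < g n := by
    have := hf p hp
    rw [hg n le_rfl]
    split_ifs <;> omega
  rw [excedanceCount_succ, if_neg hlast, add_zero]
  rcases hp.eq_or_lt with rfl | hpn
  · rw [if_pos (Or.inl rfl)]
    exact excedanceCount_congr fun i hi => by rw [hg i hi.le, if_neg hi.ne, if_neg hi.ne]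
  have hset : {i ∈ range n | i < g i} = insert p {i ∈ range n | i < f i} := by
    ext i
    simp only [mem_filter, mem_range, mem_insert]
    constructor
    · rintro ⟨hi, hgi⟩
      rw [hg i hi.le] at hgi
      split_ifs at hgi <;> omega
    · rintro (rfl | ⟨hi, hfi⟩)
      · rw [hg i hp, if_pos rfl]
        exact ⟨hpn, hpn⟩
      · rw [hg i hi.le]
        split_ifs <;> omega
  rw [excedanceCount, hset, card_insert_eq_ite]
  simp [hpn, hpn.ne, excedanceCount]

theorem card_filter_excedance_positions (f : ℕ → ℕ) (n : ℕ) :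
    #{p ∈ range (n + 1) | p = n ∨ p < f p} = excedanceCount f n + 1 := by
  rw [range_add_one, filter_insert, if_pos (Or.inl rfl), card_insert_of_notMem (by simp)]
  exact congrArg (· + 1) (congrArg card (filter_congr fun p hp => by
    simp [(mem_range.1 hp).ne]))

end Statistics

section EulerianStep

variable {R : Type*} [CommRing R]

noncomputable def eulerianStep (n : ℕ) : R[X] →ₗ[R] R[X] :=
  LinearMap.mulLeft R (1 + (n : R[X]) * X) + LinearMap.mulLeft R (X * (1 - X)) ∘ₗ derivative

theorem eulerianStep_apply (n : ℕ) (P : R[X]) :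
    eulerianStep n P = (1 + (n : R[X]) * X) * P + X * (1 - X) * derivative P :=
  rfl

theorem eulerianStep_X_pow {n k : ℕ} (hk : k ≤ n) :
    eulerianStep n (X ^ k : R[X]) = (k + 1) • X ^ k + (n - k) • X ^ (k + 1) := by
  rw [eulerianStep_apply, derivative_X_pow, nsmul_eq_mul, nsmul_eq_mul, Nat.cast_sub hk]
  cases k with
  | zero => simp
  | succ k => rw [C_eq_natCast, Nat.add_sub_cancel]; push_cast; ring

theorem sum_X_pow_eq_eulerianStep {n k : ℕ} (hk : k ≤ n) (s : Fin (n + 1) → ℕ)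
    (P : ℕ → Prop) [DecidablePred P] (hP : #{p ∈ range (n + 1) | P p} = k + 1)
    (hs : ∀ p : Fin (n + 1), s p = if P p then k else k + 1) :
    ∑ p, (X : R[X]) ^ s p = eulerianStep n (X ^ k) := by
  have hnot : #{p ∈ range (n + 1) | ¬ P p} = n - k := by
    have := card_filter_add_card_filter_not (s := range (n + 1)) (fun p => P p)
    rw [card_range] at this
    omega
  simp_rw [hs, apply_ite (X ^ ·)]
  rw [Fin.sum_univ_eq_sum_range (fun p => if P p then (X : R[X]) ^ k else X ^ (k + 1)),
    sum_ite, sum_const, sum_const, hP, hnot, eulerianStep_X_pow hk]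

end EulerianStep

section Reindexing

variable {n : ℕ}

theorem sum_perm_succ_eq {M : Type*} [AddCommMonoid M]
    (ins : Perm (Fin n) → Fin (n + 1) → Perm (Fin (n + 1)))
    (ins_self : ∀ σ p, ins σ p p = Fin.last n)
    (ins_injective : ∀ p, Injective (ins · p))
    (g : Perm (Fin (n + 1)) → M) :
    ∑ τ, g τ = ∑ σ, ∑ p, g (ins σ p) := by
  have hinj : Injective fun q : Perm (Fin n) × Fin (n + 1) => ins q.1 q.2 := by
    rintro ⟨σ, p⟩ ⟨σ', p'⟩ (h : ins σ p = ins σ' p')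
    obtain rfl : p = p' := (ins σ p).injective (by rw [ins_self, h, ins_self])
    rw [ins_injective p h]
  have hbij : Bijective fun q : Perm (Fin n) × Fin (n + 1) => ins q.1 q.2 :=
    (Fintype.bijective_iff_injective_and_card _).2
      ⟨hinj, by simp [Fintype.card_perm, Nat.factorial_succ, mul_comm]⟩
  rw [← Fintype.sum_prod_type', Fintype.sum_bijective _ hbij _ _ fun _ => rfl]

theorem oneLineInsert_left_injective (p : Fin (n + 1)) : Injective (oneLineInsert · p) := by
  intro σ σ' h
  refine Equiv.ext fun j => ?_
  simpa using DFunLike.congr_fun h (p.succAbove j)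

theorem cycleInsert_left_injective (p : Fin (n + 1)) : Injective (cycleInsert · p) := by
  intro σ σ' (h : cycleInsert σ p = cycleInsert σ' p)
  have hp : extendLast σ p = extendLast σ' p := by
    rw [← cycleInsert_last, h, cycleInsert_last]
  refine Equiv.ext fun j => ?_
  have hj := DFunLike.congr_fun h j.castSucc
  simp only [cycleInsert, trans_apply, extendLast_castSucc, hp] at hj
  simpa using (Equiv.swap _ _).injective hj

end Reindexing

section Recursions

variable {R : Type*} [CommRing R] {n : ℕ}

theorem des_oneLineInsert (σ : Perm (Fin n)) (p : Fin (n + 1)) :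
    des (oneLineInsert σ p) =
      if (p : ℕ) = n ∨ (0 < (p : ℕ) ∧ permToNat σ p < permToNat σ (p - 1))
      then des σ else des σ + 1 :=
  descentCount_insert p.is_le (fun _ hi => permToNat_lt σ hi)
    (fun _ hi => permToNat_oneLineInsert σ p hi)

theorem exc_cycleInsert (σ : Perm (Fin n)) (p : Fin (n + 1)) :
    exc (cycleInsert σ p) =
      if (p : ℕ) = n ∨ (p : ℕ) < permToNat σ p then exc σ else exc σ + 1 :=
  excedanceCount_insert p.is_le (fun _ hi => permToNat_le σ hi)
    (fun _ hi => permToNat_cycleInsert σ p hi)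

theorem sum_X_pow_des_succ :
    ∑ τ : Perm (Fin (n + 1)), (X : R[X]) ^ des τ =
      eulerianStep n (∑ σ : Perm (Fin n), X ^ des σ) := by
  rw [sum_perm_succ_eq oneLineInsert oneLineInsert_self oneLineInsert_left_injective, map_sum]
  exact sum_congr rfl fun σ _ => sum_X_pow_eq_eulerianStep
    ((descentCount_le _ _).trans (Nat.sub_le n 1)) _ _
    (card_filter_descent_positions _ n) (des_oneLineInsert σ)

theorem sum_X_pow_exc_succ :
    ∑ τ : Perm (Fin (n + 1)), (X : R[X]) ^ exc τ =
      eulerianStep n (∑ σ : Perm (Fin n), X ^ exc σ) := by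
  rw [sum_perm_succ_eq cycleInsert cycleInsert_self cycleInsert_left_injective, map_sum]
  exact sum_congr rfl fun σ _ => sum_X_pow_eq_eulerianStep (excedanceCount_le _ _) _ _
    (card_filter_excedance_positions _ n) (exc_cycleInsert σ)

end Recursions

theorem des_exc_equidistributed_general (n : ℕ) :
    ∑ π : Equiv.Perm (Fin n), (Polynomial.X : Polynomial ℤ) ^ des π =
      ∑ π : Equiv.Perm (Fin n), (Polynomial.X : Polynomial ℤ) ^ exc π := by
  induction n with
  | zero => rfl
  | succ n ih => rw [sum_X_pow_des_succ, sum_X_pow_exc_succ, ih]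

/-- The descent and excedance statistics are equidistributed over the symmetric group. -/
theorem des_exc_equidistributed (n : ℕ) (hn : 1 ≤ n) :
    ∑ π : Equiv.Perm (Fin n), (Polynomial.X : Polynomial ℤ) ^ des π =
      ∑ π : Equiv.Perm (Fin n), (Polynomial.X : Polynomial ℤ) ^ exc π :=
  des_exc_equidistributed_general n
end

section
/- For every polynomial f of degree n, there is a unique decomposition f(x) = a(x) + x·b(x) where a and b are symmetric polynomials centered appropriately; explicitly a(x) = (f(x) − x^{n+1} f(1/x))/(1 − x) and b(x) = (x^n f(1/x) − f(x))/(1 − x), where a satisfies x^n a(1/x) = a(x) and b satisfies x^{n-1} b(1/x) = b(x). -/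
/-!
Reflecting `f = a + X * b` in degree `n` gives `X^n f(1/X) = a + b`, so `(1 - X) * b` equals
`X^n f(1/X) - f` and the decomposition is forced. Conversely `1 - X` divides `X^n f(1/X) - f`,
since both terms take the same value at `1`; reflection negates both this difference and `1 - X`,
so the quotient `b` is symmetric, and then so is `a = f - X * b`.
-/

open Polynomial

namespace Polynomial

section Semiring

variable {R : Type*} [Semiring R] {n : ℕ} {b : R[X]}

theorem reflect_X_mul (h : (X * b).natDegree ≤ n) : reflect n (X * b) = reflect (n - 1) b := by
  nontriviality R
  rcases eq_or_ne b 0 with rfl | hb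
  · simp
  rw [natDegree_X_mul hb] at h
  obtain ⟨m, rfl⟩ : ∃ m, n = m + 1 := ⟨n - 1, by omega⟩
  rw [add_comm, reflect_mul _ _ natDegree_X_le (by omega), reflect_one_X, one_mul,
    Nat.add_sub_cancel_left]

end Semiring

theorem eval_one_reflect {R : Type*} [CommSemiring R] {N : ℕ} {f : R[X]}
    (hf : f.natDegree ≤ N) : (reflect N f).eval 1 = f.eval 1 := by
  let _ : Invertible (1 : R) := invertibleOne
  simpa [eval₂_eq_eval_map] using eval₂_reflect_mul_pow (RingHom.id R) 1 N f hf

variable {R : Type*} [CommRing R] {n : ℕ} {f a b a' b' : R[X]}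

theorem isLeftRegular_one_sub_X : IsLeftRegular (1 - X : R[X]) := by
  intro p q h
  apply (monic_X_sub_C (1 : R)).isRegular.left
  simp only [map_one] at h ⊢
  linear_combination -h

def IsSymmetricDecomposition (n : ℕ) (f a b : R[X]) : Prop :=
  f = a + X * b ∧ a.natDegree ≤ n ∧ b.natDegree ≤ n - 1 ∧ reflect n a = a ∧ reflect (n - 1) b = b

namespace IsSymmetricDecomposition

theorem reflect_eq_add (hf : f.natDegree ≤ n) (h : IsSymmetricDecomposition n f a b) :
    reflect n f = a + b := by
  obtain ⟨rfl, ha, -, ha_symm, hb_symm⟩ := h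
  have hXb : (X * b).natDegree ≤ n := by
    simpa using (natDegree_sub_le (a + X * b) a).trans (max_le hf ha)
  rw [reflect_add, ha_symm, reflect_X_mul hXb, hb_symm]

theorem one_sub_X_mul (hf : f.natDegree ≤ n) (h : IsSymmetricDecomposition n f a b) :
    (1 - X) * a = f - X * reflect n f ∧ (1 - X) * b = reflect n f - f := by
  rw [h.reflect_eq_add hf, h.1]
  constructor <;> ring

theorem unique (hf : f.natDegree ≤ n) (h : IsSymmetricDecomposition n f a b)
    (h' : IsSymmetricDecomposition n f a' b') : a = a' ∧ b = b' := by
  have hb : b = b' :=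
    isLeftRegular_one_sub_X ((h.one_sub_X_mul hf).2.trans (h'.one_sub_X_mul hf).2.symm)
  refine ⟨?_, hb⟩
  linear_combination h.1.symm.trans h'.1 - X * hb

end IsSymmetricDecomposition

theorem exists_isSymmetricDecomposition (hf : f.natDegree ≤ n) :
    ∃ a b, IsSymmetricDecomposition n f a b := by
  obtain _ | m := n
  · refine ⟨f, 0, by simp, hf, by simp, ?_, reflect_zero⟩
    rw [eq_C_of_natDegree_le_zero hf, reflect_C, pow_zero, mul_one]
  set b := (f - reflect (m + 1) f) /ₘ (X - C 1)
  have hb : (X - C 1) * b = f - reflect (m + 1) f :=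
    mul_divByMonic_eq_iff_isRoot.2 (by simp [eval_one_reflect hf])
  have hb_deg : b.natDegree ≤ m := by
    nontriviality R
    rw [natDegree_divByMonic _ (monic_X_sub_C 1), natDegree_X_sub_C]
    have := (natDegree_sub_le f (reflect (m + 1) f)).trans
      (max_le hf (natDegree_reflect_le.trans (max_le le_rfl hf)))
    omega
  have hXb : (X * b).natDegree ≤ m + 1 :=
    natDegree_mul_le.trans (by linarith [natDegree_X_le (R := R)])
  have hb_symm : reflect m b = b := by
    have h_left : reflect (1 + m) ((X - C 1) * b) = (1 - X) * reflect m b := by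
      rw [reflect_mul _ _ (natDegree_X_sub_C_le 1) hb_deg, reflect_sub, reflect_one_X, reflect_C,
        map_one]
      ring
    have h_right : reflect (1 + m) ((X - C 1) * b) = -((X - C 1) * b) := by
      rw [add_comm 1 m, hb, reflect_sub, reflect_reflect]
      ring
    apply (monic_X_sub_C (1 : R)).isRegular.left
    simp only [map_one] at h_left h_right ⊢
    linear_combination h_right.symm.trans h_left
  refine ⟨f - X * b, b, by ring, ?_, hb_deg, ?_, hb_symm⟩
  · exact (natDegree_sub_le _ _).trans (max_le hf hXb)
  · rw [reflect_sub, reflect_X_mul hXb, Nat.add_sub_cancel, hb_symm]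
    simp only [map_one] at hb
    linear_combination hb

end Polynomial

theorem symmetric_decomposition_general (n : ℕ) (f : Polynomial ℚ)
    (hf : f.natDegree = n) :
    (∃! p : Polynomial ℚ × Polynomial ℚ,
      f = p.1 + X * p.2 ∧ p.1.natDegree ≤ n ∧ p.2.natDegree ≤ n - 1 ∧
        reflect n p.1 = p.1 ∧ reflect (n - 1) p.2 = p.2) ∧
    (∀ a b : Polynomial ℚ,
      f = a + X * b → a.natDegree ≤ n → b.natDegree ≤ n - 1 →
      reflect n a = a → reflect (n - 1) b = b →
      (1 - X) * a = f - X * reflect n f ∧ (1 - X) * b = reflect n f - f) := by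
  obtain ⟨a, b, hab⟩ := exists_isSymmetricDecomposition hf.le
  refine ⟨⟨(a, b), hab, fun p hp => ?_⟩, fun a' b' h₁ h₂ h₃ h₄ h₅ => ?_⟩
  · obtain ⟨h₁, h₂⟩ := IsSymmetricDecomposition.unique hf.le hp hab
    exact Prod.ext h₁ h₂
  · exact IsSymmetricDecomposition.one_sub_X_mul hf.le ⟨h₁, h₂, h₃, h₄, h₅⟩

/-- Every polynomial `f` of degree `n` has a unique decomposition `f = a + X * b` with
`a` symmetric of center `n/2` and `b` symmetric of center `(n-1)/2`; explicitly
`a = (f - X^{n+1} f(1/X))/(1-X)` and `b = (X^n f(1/X) - f)/(1-X)`, where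
`X^{n+1} f(1/X) = X * reflect n f` and `X^n f(1/X) = reflect n f`. -/
theorem symmetric_decomposition (n : ℕ) (f : Polynomial ℚ) (hf0 : f ≠ 0)
    (hf : f.natDegree = n) :
    (∃! p : Polynomial ℚ × Polynomial ℚ,
      f = p.1 + X * p.2 ∧ p.1.natDegree ≤ n ∧ p.2.natDegree ≤ n - 1 ∧
        reflect n p.1 = p.1 ∧ reflect (n - 1) p.2 = p.2) ∧
    (∀ a b : Polynomial ℚ,
      f = a + X * b → a.natDegree ≤ n → b.natDegree ≤ n - 1 →
      reflect n a = a → reflect (n - 1) b = b →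
      (1 - X) * a = f - X * reflect n f ∧ (1 - X) * b = reflect n f - f) :=
  symmetric_decomposition_general n f hf
end

section
/- Let f(x) = Σ_{i=0}^n f_i x^i have nonnegative coefficients with symmetric decomposition f(x) = a(x) + x b(x), where deg a = n and deg b = n−1 and a, b have nonnegative coefficients. Then f is alternatingly increasing (i.e., f_0 ≤ f_n ≤ f_1 ≤ f_{n-1} ≤ ... ≤ f_{⌊(n+1)/2⌋}) if and only if both a and b are unimodal. -/
open Polynomial

/-- A polynomial is unimodal (as a coefficient sequence of length `m+1`). -/
def Unimodal (f : Polynomial ℝ) (m : ℕ) : Prop :=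
  ∃ j, j ≤ m ∧ (∀ i, i < j → f.coeff i ≤ f.coeff (i + 1)) ∧
    ∀ i, j ≤ i → i < m → f.coeff (i + 1) ≤ f.coeff i

/-- A polynomial of degree `n` is alternatingly increasing:
`f_0 ≤ f_n ≤ f_1 ≤ f_{n-1} ≤ ⋯ ≤ f_{⌊(n+1)/2⌋}`. -/
def AlternatinglyIncreasing (f : Polynomial ℝ) (n : ℕ) : Prop :=
  (∀ i, 2 * i ≤ n → f.coeff i ≤ f.coeff (n - i)) ∧
    ∀ i, 2 * i + 1 < n → f.coeff (n - i) ≤ f.coeff (i + 1)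

/-! By the symmetry of `a` and `b`, the coefficients of `f = a + X b` satisfy
`f_{i+1} = a_{i+1} + b_i` and `f_{n-i} = a_i + b_i`. Hence the comparison `f_{n-i} ≤ f_{i+1}`
is exactly the step `a_i ≤ a_{i+1}`, and `f_{i+1} ≤ f_{n-i-1}` is exactly the step
`b_i ≤ b_{i+1}`, while `f_0 ≤ f_n` reduces to `0 ≤ b_0`. It remains to note that a symmetric
sequence is unimodal iff it increases up to its middle. -/

theorem coeff_sub_eq_of_reflect_eq {R : Type*} [Semiring R] {p : R[X]} {N i : ℕ}
    (hp : reflect N p = p) (hi : i ≤ N) : p.coeff (N - i) = p.coeff i := by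
  conv_rhs => rw [← hp]
  rw [coeff_reflect, revAt_le hi]

section Unimodal

variable {c : ℝ[X]} {m : ℕ}

theorem coeff_le_coeff_succ_iff_of_reflect_eq (hc : reflect m c = c) {i k : ℕ}
    (hik : i + k + 1 = m) : c.coeff i ≤ c.coeff (i + 1) ↔ c.coeff (k + 1) ≤ c.coeff k := by
  have hi := coeff_sub_eq_of_reflect_eq hc (i := i) (by omega)
  have hi' := coeff_sub_eq_of_reflect_eq hc (i := i + 1) (by omega)
  rw [show m - i = k + 1 by omega] at hi
  rw [show m - (i + 1) = k by omega] at hi'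
  rw [hi, hi']

theorem unimodal_iff_of_reflect_eq (hc : reflect m c = c) :
    Unimodal c m ↔ ∀ i, 2 * i < m → c.coeff i ≤ c.coeff (i + 1) := by
  constructor
  · rintro ⟨j, -, hinc, hdec⟩ i hi
    rcases lt_or_ge i j with hij | hji
    · exact hinc i hij
    · exact (coeff_le_coeff_succ_iff_of_reflect_eq hc (k := m - (i + 1)) (by omega)).2
        (hdec _ (by omega) (by omega))
  · intro hinc
    refine ⟨(m + 1) / 2, by omega, fun i hi => hinc i (by omega), fun i hji him => ?_⟩
    exact (coeff_le_coeff_succ_iff_of_reflect_eq hc (i := m - (i + 1)) (by omega)).1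
      (hinc _ (by omega))

end Unimodal

section SymmetricDecomposition

variable {n i : ℕ} {f a b : ℝ[X]}

theorem coeff_succ_of_eq_add_X_mul (hf : f = a + X * b) :
    f.coeff (i + 1) = a.coeff (i + 1) + b.coeff i := by
  rw [hf, coeff_add, coeff_X_mul]

theorem coeff_sub_of_symmetric_decomposition (hf : f = a + X * b) (ha : reflect n a = a)
    (hb : reflect (n - 1) b = b) (hi : i < n) :
    f.coeff (n - i) = a.coeff i + b.coeff i := by
  rw [show n - i = n - 1 - i + 1 by omega, coeff_succ_of_eq_add_X_mul hf,
    show n - 1 - i + 1 = n - i by omega, coeff_sub_eq_of_reflect_eq ha hi.le,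
    coeff_sub_eq_of_reflect_eq hb (by omega)]

theorem forall_coeff_le_coeff_sub_iff (hn : 1 ≤ n) (hf : f = a + X * b)
    (ha : reflect n a = a) (hb : reflect (n - 1) b = b) (hb₀ : 0 ≤ b.coeff 0) :
    (∀ i, 2 * i ≤ n → f.coeff i ≤ f.coeff (n - i)) ↔
      ∀ i, 2 * i < n - 1 → b.coeff i ≤ b.coeff (i + 1) := by
  have step : ∀ i, i + 1 < n →
      (f.coeff (i + 1) ≤ f.coeff (n - (i + 1)) ↔ b.coeff i ≤ b.coeff (i + 1)) := by
    intro i hi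
    rw [coeff_succ_of_eq_add_X_mul hf, coeff_sub_of_symmetric_decomposition hf ha hb hi,
      add_le_add_iff_left]
  constructor
  · exact fun h i hi => (step i (by omega)).1 (h (i + 1) (by omega))
  · rintro h (_ | i) hi
    · rw [coeff_sub_of_symmetric_decomposition hf ha hb (by omega)]
      simpa [hf] using hb₀
    · exact (step i (by omega)).2 (h i (by omega))

theorem forall_coeff_sub_le_coeff_succ_iff (hf : f = a + X * b)
    (ha : reflect n a = a) (hb : reflect (n - 1) b = b) :
    (∀ i, 2 * i + 1 < n → f.coeff (n - i) ≤ f.coeff (i + 1)) ↔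
      ∀ i, 2 * i < n → a.coeff i ≤ a.coeff (i + 1) := by
  have step : ∀ i, i < n →
      (f.coeff (n - i) ≤ f.coeff (i + 1) ↔ a.coeff i ≤ a.coeff (i + 1)) := by
    intro i hi
    rw [coeff_sub_of_symmetric_decomposition hf ha hb hi, coeff_succ_of_eq_add_X_mul hf,
      add_le_add_iff_right]
  constructor
  · intro h i hi
    rcases (show 2 * i + 1 < n ∨ 2 * i + 1 = n by omega) with hlt | hmid
    · exact (step i (by omega)).1 (h i hlt)
    · have hsym := coeff_sub_eq_of_reflect_eq ha (i := i) (by omega)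
      rw [show n - i = i + 1 by omega] at hsym
      exact hsym.ge
  · exact fun h i hi => (step i (by omega)).2 (h i (by omega))

end SymmetricDecomposition

theorem alternatingly_increasing_iff_unimodal_general (n : ℕ) (hn : 1 ≤ n)
    (f a b : Polynomial ℝ)
    (hdecomp : f = a + X * b)
    (hasym : reflect n a = a) (hbsym : reflect (n - 1) b = b)
    (hbpos : ∀ i, 0 ≤ b.coeff i) :
    AlternatinglyIncreasing f n ↔ Unimodal a n ∧ Unimodal b (n - 1) := by
  rw [AlternatinglyIncreasing, unimodal_iff_of_reflect_eq hasym, unimodal_iff_of_reflect_eq hbsym,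
    forall_coeff_le_coeff_sub_iff hn hdecomp hasym hbsym (hbpos 0),
    forall_coeff_sub_le_coeff_succ_iff hdecomp hasym hbsym, and_comm]

/-- Beck–Jochemko–McCullough: if `f = a + X b` is the symmetric decomposition of `f`,
with `deg a = n`, `deg b = n - 1` and nonnegative coefficients, then `f` is
alternatingly increasing iff `a` and `b` are both unimodal. -/
theorem alternatingly_increasing_iff_unimodal (n : ℕ) (hn : 1 ≤ n)
    (f a b : Polynomial ℝ)
    (hdecomp : f = a + X * b)
    (hadeg : a.natDegree = n) (hbdeg : b.natDegree = n - 1)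
    (hasym : reflect n a = a) (hbsym : reflect (n - 1) b = b)
    (hfpos : ∀ i, 0 ≤ f.coeff i) (hapos : ∀ i, 0 ≤ a.coeff i)
    (hbpos : ∀ i, 0 ≤ b.coeff i) :
    AlternatinglyIncreasing f n ↔ Unimodal a n ∧ Unimodal b (n - 1) :=
  alternatingly_increasing_iff_unimodal_general n hn f a b hdecomp hasym hbsym hbpos
end
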